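/- The effect of a P-winning priority on the signature: if j is a P-winning number and σ_P(t) = (θ_{i'}, ..., θ_{k'}) ≠ ∞, then σ_P(p_j(t)) = (θ_{i'}, ..., θ_{j-1}, 0, ..., 0): coordinates strictly below j are preserved and coordinates at or above j are zeroed. -/

import Mathlib

namespace UnambSig

/-- The symbols of the alphabet `A^~_{i,k}`: unary priority symbols `p j`,
binary choice symbols of the two players (`true` is player 1), and the unary
player-swapping symbol `~`. -/
inductive Sym where
  | pri : ℕ → Sym
  | choice : Bool → Sym
  | neg : Sym
deriving DecidableEq

/-- Arity of a symbol. -/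
def Sym.arity : Sym → ℕ
  | .pri _ => 1
  | .choice _ => 2
  | .neg => 1

/-- A labelling of potential tree nodes (lists of directions, from the root). -/
abbrev Label := List ℕ → Option Sym

/-- `t` is a tree over the alphabet `A^~_{i,k}`: the root is defined, children
match arities, the domain is closed and priorities are within `{i,…,k}`. -/
def IsTree (t : Label) (i k : ℕ) : Prop :=
  t [] ≠ none ∧
  (∀ u s, t u = some s → ∀ d : ℕ, (t (u ++ [d]) ≠ none ↔ d < s.arity)) ∧
  (∀ u (d : ℕ), t u = none → t (u ++ [d]) = none) ∧
  (∀ u j, t u = some (Sym.pri j) → i ≤ j ∧ j ≤ k)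

/-- The number of strict ancestors of `u` labelled by `~`. -/
def tildeCount (t : Label) (u : List ℕ) : ℕ :=
  (List.range u.length).countP (fun m => decide (t (u.take m) = some Sym.neg))

/-- A node is kept if it has an even number of `~`-labelled strict ancestors. -/
def kept (t : Label) (u : List ℕ) : Prop := tildeCount t u % 2 = 0

instance (t : Label) (u : List ℕ) : Decidable (kept t u) := by
  unfold kept; infer_instance

/-- The node of a branch `α` at depth `n`. -/
def pref (α : ℕ → ℕ) (n : ℕ) : List ℕ := (List.range n).map α

/-- `α` is an infinite branch of `t`. -/
def IsBranch (t : Label) (α : ℕ → ℕ) : Prop := ∀ n, t (pref α n) ≠ none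

/-- `t` is well-formed: no branch contains infinitely many `~`. -/
def WellFormed (t : Label) : Prop :=
  ∀ α : ℕ → ℕ, IsBranch t α → {n : ℕ | t (pref α n) = some Sym.neg}.Finite

/-- `t` is a well-formed tree over `A^~_{i,k}`. -/
def GoodTree (t : Label) (i k : ℕ) : Prop := IsTree t i k ∧ WellFormed t

/-- The effective priority of a node: the labelled priority, shifted by one at
switched nodes (each `~` swaps the players). -/
def effPri (t : Label) (u : List ℕ) : Option ℕ :=
  match t u with
  | some (Sym.pri j) => some (if kept t u then j else j + 1)
  | _ => none

/-- The player controlling a node: the player named by the choice symbol,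
swapped if the node is switched. -/
def ctrl (t : Label) (u : List ℕ) : Option Bool :=
  match t u with
  | some (Sym.choice Q) => some (if kept t u then Q else !Q)
  | _ => none

/-- The effective priority `j` appears infinitely often on the branch `α`. -/
def InfOften (t : Label) (α : ℕ → ℕ) (j : ℕ) : Prop :=
  {n : ℕ | effPri t (pref α n) = some j}.Infinite

/-- The branch `α` is winning for player `P` in the game `G(t)`: the least
effective priority occurring infinitely often has the parity favourable to `P`
(even for player 1 = `true`). -/
def WinsBranch (t : Label) (P : Bool) (α : ℕ → ℕ) : Prop :=
  ∃ j, InfOften t α j ∧ (∀ j' < j, ¬ InfOften t α j') ∧ (Even j ↔ P = true)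

/-- A strategy of player `P` in `G(t)`, identified (since the arena is a tree)
with a prefix-closed set of nodes: deterministic at `P`'s positions and full at
the other positions. -/
def IsStrategy (t : Label) (P : Bool) (S : List ℕ → Prop) : Prop :=
  S [] ∧
  (∀ u, S u → t u ≠ none) ∧
  (∀ u (d : ℕ), S (u ++ [d]) → S u) ∧
  (∀ u, S u → ctrl t u = some P → ∃! d : ℕ, S (u ++ [d])) ∧
  (∀ u (d : ℕ), S u → ctrl t u ≠ some P → t (u ++ [d]) ≠ none → S (u ++ [d]))

/-- An infinite play of `S`: a branch all of whose prefixes belong to `S`. -/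
def IsPlayOf (S : List ℕ → Prop) (α : ℕ → ℕ) : Prop := ∀ n, S (pref α n)

/-- A winning strategy of `P`: all its infinite plays are winning for `P`. -/
def IsWinningStrategy (t : Label) (P : Bool) (S : List ℕ → Prop) : Prop :=
  IsStrategy t P S ∧ ∀ α, IsPlayOf S α → WinsBranch t P α

/-- `j` is a `P`-losing priority: within `{i,…,k}` and of the parity
unfavourable to `P` (odd for player 1 = `true`). -/
def PLosing (i k : ℕ) (P : Bool) (j : ℕ) : Prop :=
  i ≤ j ∧ j ≤ k ∧ (Odd j ↔ P = true)

/-- `j` is a `P`-winning priority. -/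
def PWinning (i k : ℕ) (P : Bool) (j : ℕ) : Prop :=
  i ≤ j ∧ j ≤ k ∧ ¬ (Odd j ↔ P = true)

/-- A position `u` of the strategy `S` is active: it carries a `P`-losing
priority `j` and no strict ancestor is labelled `~` or by a smaller priority. -/
def Active (t : Label) (i k : ℕ) (P : Bool) (S : List ℕ → Prop) (u : List ℕ) : Prop :=
  S u ∧ ∃ j, t u = some (Sym.pri j) ∧ PLosing i k P j ∧
    ∀ w, w <+: u → w ≠ u →
      (t w ≠ some Sym.neg ∧ ∀ j', t w = some (Sym.pri j') → j ≤ j')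

/-- `w` is a `⪯`-minimal active position above `u` (an element of `suk_u(Σ)`). -/
def Suk (t : Label) (i k : ℕ) (P : Bool) (S : List ℕ → Prop) (u w : List ℕ) : Prop :=
  Active t i k P S w ∧ u <+: w ∧
    ∀ w', Active t i k P S w' → u <+: w' → w' <+: w → w' = w

/-- The relation `u ≫ w` associated with the strategy `S`. -/
def Gg (t : Label) (i k : ℕ) (P : Bool) (S : List ℕ → Prop) (u w : List ℕ) : Prop :=
  S u ∧ S w ∧ u <+: w ∧ u ≠ w ∧
    ∃ w', Active t i k P S w' ∧ u <+: w' ∧ w' <+: w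

/-- Lexicographic strict order on `P`-signatures (tuples of ordinals indexed by
the `P`-losing priorities; smaller indices are more significant). -/
def sigLt (i k : ℕ) (P : Bool) (σ τ : ℕ → Ordinal) : Prop :=
  ∃ j, PLosing i k P j ∧ σ j < τ j ∧
    ∀ j', PLosing i k P j' → j' < j → σ j' = τ j'

/-- Equality of `P`-signatures (on the relevant coordinates). -/
def sigEq (i k : ℕ) (P : Bool) (σ τ : ℕ → Ordinal) : Prop :=
  ∀ j, PLosing i k P j → σ j = τ j

/-- Lexicographic order on `P`-signatures. -/
def sigLe (i k : ℕ) (P : Bool) (σ τ : ℕ → Ordinal) : Prop :=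
  sigLt i k P σ τ ∨ sigEq i k P σ τ

/-- Lexicographic strict order on prefixes `σ↾ℓ` of `P`-signatures. -/
def sigLtBelow (i k : ℕ) (P : Bool) (ℓ : ℕ) (σ τ : ℕ → Ordinal) : Prop :=
  ∃ j, PLosing i k P j ∧ j ≤ ℓ ∧ σ j < τ j ∧
    ∀ j', PLosing i k P j' → j' < j → σ j' = τ j'

/-- Equality of the prefixes `σ↾ℓ`. -/
def sigEqBelow (i k : ℕ) (P : Bool) (ℓ : ℕ) (σ τ : ℕ → Ordinal) : Prop :=
  ∀ j, PLosing i k P j → j ≤ ℓ → σ j = τ j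

/-- Lexicographic order on the prefixes `σ↾ℓ`. -/
def sigLeBelow (i k : ℕ) (P : Bool) (ℓ : ℕ) (σ τ : ℕ → Ordinal) : Prop :=
  sigLtBelow i k P ℓ σ τ ∨ sigEqBelow i k P ℓ σ τ

/-- Order on signatures extended by `∞` (represented by `none`) as maximum. -/
def extLe (i k : ℕ) (P : Bool) : Option (ℕ → Ordinal) → Option (ℕ → Ordinal) → Prop
  | _, none => True
  | none, some _ => False
  | some σ, some τ => sigLe i k P σ τ

/-- Equality of signatures extended by `∞`. -/
def extEq (i k : ℕ) (P : Bool) : Option (ℕ → Ordinal) → Option (ℕ → Ordinal) → Prop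
  | none, none => True
  | some σ, some τ => sigEq i k P σ τ
  | _, _ => False

/-- Order on prefixes `σ↾ℓ` of signatures extended by `∞`. -/
def extLeBelow (i k : ℕ) (P : Bool) (ℓ : ℕ) :
    Option (ℕ → Ordinal) → Option (ℕ → Ordinal) → Prop
  | _, none => True
  | none, some _ => False
  | some σ, some τ => sigLeBelow i k P ℓ σ τ

/-- Strict order on prefixes `σ↾ℓ` of signatures extended by `∞`. -/
def extLtBelow (i k : ℕ) (P : Bool) (ℓ : ℕ) :
    Option (ℕ → Ordinal) → Option (ℕ → Ordinal) → Prop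
  | none, _ => False
  | some _, none => True
  | some σ, some τ => sigLtBelow i k P ℓ σ τ

/-- `s` is the signature assignment `s(·,Σ)` of the strategy `S`: at an active
node with priority `j`, the coordinate `j` of the child's value is incremented
by one and the later coordinates are zeroed; at a non-active node of `S`, the
value is the least upper bound (in the lexicographic order) of the values at
the `⪯`-minimal active descendants. -/
def SigDef (t : Label) (i k : ℕ) (P : Bool) (S : List ℕ → Prop)
    (s : List ℕ → ℕ → Ordinal) : Prop :=
  (∀ u j, Active t i k P S u → t u = some (Sym.pri j) →
    ∀ j', PLosing i k P j' →
      (j' < j → s u j' = s (u ++ [0]) j') ∧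
      (j' = j → s u j' = s (u ++ [0]) j + 1) ∧
      (j < j' → s u j' = 0)) ∧
  (∀ u, S u → ¬ Active t i k P S u →
    (∀ w, Suk t i k P S u w → sigLe i k P (s w) (s u)) ∧
    (∀ τ, (∀ w, Suk t i k P S u w → sigLe i k P (s w) τ) → sigLe i k P (s u) τ))

/-- The subtree of `t` rooted at `u`. -/
def subtree (t : Label) (u : List ℕ) : Label := fun w => t (u ++ w)

/-- The tree with a unary root symbol `s` and subtree `t`. -/
def node1 (s : Sym) (t : Label) : Label := fun u =>
  match u with
  | [] => some s
  | 0 :: w => t w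
  | _ => none

/-- The tree with root the binary choice symbol of player `b` and the given
left and right subtrees. -/
def node2 (b : Bool) (tL tR : Label) : Label := fun u =>
  match u with
  | [] => some (Sym.choice b)
  | 0 :: w => tL w
  | 1 :: w => tR w
  | _ => none

/-- `σ` is the value `s(ε,Σ)` of some winning strategy `Σ` of `P` in `G(t)`. -/
def ValOf (t : Label) (i k : ℕ) (P : Bool) (σ : ℕ → Ordinal) : Prop :=
  ∃ (S : List ℕ → Prop) (s : List ℕ → ℕ → Ordinal),
    IsWinningStrategy t P S ∧ SigDef t i k P S s ∧ sigEq i k P σ (s [])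

/-- `σ` is the signature `σ_P(t)`: the lexicographic infimum (= minimum) of the
values of the winning strategies of `P` in `G(t)`. -/
def IsSigOf (t : Label) (i k : ℕ) (P : Bool) (σ : ℕ → Ordinal) : Prop :=
  ValOf t i k P σ ∧ ∀ τ, ValOf t i k P τ → sigLe i k P σ τ

/-- `a` is the extended signature `σ_P(t)`, with `none` representing `∞`
(no winning strategy of `P` exists). -/
def IsExtSigOf (t : Label) (i k : ℕ) (P : Bool) : Option (ℕ → Ordinal) → Prop
  | none => ¬ ∃ S : List ℕ → Prop, IsWinningStrategy t P S
  | some σ => IsSigOf t i k P σ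

/-- The six invariants of the signature lemma for a pair of assignments
`σ' : Bool → Label → Option (ℕ → Ordinal)` (with `none` playing the role of
`∞`): (1) `σ'_P(t) = ∞` iff `P` loses `G(t)`; (2) `σ'_P(~(t)) = (0,…,0)` if `P`
wins `G(~(t))`; (3) prepending a `P`-winning priority `j` keeps the coordinates
below `j` and zeroes the ones `≥ j`; (4) prepending a `P`-losing priority `j`
increments coordinate `j` and zeroes the later ones; (5) the min rule at `P`'s
choice nodes; (6) the max rule at the opponent's choice nodes. -/
def SigInvariants (i k : ℕ) (σ' : Bool → Label → Option (ℕ → Ordinal)) : Prop :=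
  (∀ (P : Bool) (t : Label), GoodTree t i k →
    (σ' P t = none ↔ ¬ ∃ S : List ℕ → Prop, IsWinningStrategy t P S)) ∧
  (∀ (P : Bool) (t : Label), GoodTree t i k →
    (∃ S : List ℕ → Prop, IsWinningStrategy (node1 Sym.neg t) P S) →
    ∃ τ, σ' P (node1 Sym.neg t) = some τ ∧ ∀ j, PLosing i k P j → τ j = 0) ∧
  (∀ (P : Bool) (t : Label) (j : ℕ) (τ : ℕ → Ordinal), GoodTree t i k →
    PWinning i k P j → σ' P t = some τ →
    ∃ τ', σ' P (node1 (Sym.pri j) t) = some τ' ∧ ∀ j', PLosing i k P j' →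
      (j' < j → τ' j' = τ j') ∧ (j ≤ j' → τ' j' = 0)) ∧
  (∀ (P : Bool) (t : Label) (j : ℕ) (τ : ℕ → Ordinal), GoodTree t i k →
    PLosing i k P j → σ' P t = some τ →
    ∃ τ', σ' P (node1 (Sym.pri j) t) = some τ' ∧ ∀ j', PLosing i k P j' →
      (j' < j → τ' j' = τ j') ∧ (j' = j → τ' j' = τ j + 1) ∧ (j < j' → τ' j' = 0)) ∧
  (∀ (P : Bool) (tL tR : Label), GoodTree tL i k → GoodTree tR i k →
    (extLe i k P (σ' P tL) (σ' P tR) →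
      extEq i k P (σ' P (node2 P tL tR)) (σ' P tL)) ∧
    (extLe i k P (σ' P tR) (σ' P tL) →
      extEq i k P (σ' P (node2 P tL tR)) (σ' P tR))) ∧
  (∀ (P : Bool) (tL tR : Label), GoodTree tL i k → GoodTree tR i k →
    (extLe i k P (σ' P tL) (σ' P tR) →
      extEq i k P (σ' P (node2 (!P) tL tR)) (σ' P tR)) ∧
    (extLe i k P (σ' P tR) (σ' P tL) →
      extEq i k P (σ' P (node2 (!P) tL tR)) (σ' P tL)))

/-- `S` is a `σ'`-optimal strategy of `P` in `G(t)`: at each position controlled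
by `P` it moves to a subtree of lexicographically minimal `σ'`-value for the
appropriate player (depending on whether the position is kept or switched). -/
def IsOptimal (t : Label) (i k : ℕ) (P : Bool)
    (σ' : Bool → Label → Option (ℕ → Ordinal)) (S : List ℕ → Prop) : Prop :=
  IsStrategy t P S ∧
  ∀ u (d : ℕ), S u → ctrl t u = some P → S (u ++ [d]) →
    ∀ d' : ℕ, t (u ++ [d']) ≠ none →
      extLe i k (if kept t u then P else !P)
        (σ' (if kept t u then P else !P) (subtree t (u ++ [d])))
        (σ' (if kept t u then P else !P) (subtree t (u ++ [d'])))

/-- A partial strategy of `P`: a `P`-deterministic behaviour (nonempty,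
prefix-closed, without maximal elements, deterministic at `P`'s positions). -/
def IsPartialStrategy (t : Label) (P : Bool) (S : List ℕ → Prop) : Prop :=
  S [] ∧
  (∀ u, S u → t u ≠ none) ∧
  (∀ u (d : ℕ), S (u ++ [d]) → S u) ∧
  (∀ u, S u → ctrl t u = some P → ∃! d : ℕ, S (u ++ [d])) ∧
  (∀ u, S u → ∃ d : ℕ, S (u ++ [d]))

/-- The position `u` is not reachable by the partial strategy `S` of `P`: it is
a child, outside `S`, of an opponent position of `S`. -/
def NotReachable (t : Label) (P : Bool) (S : List ℕ → Prop) (u : List ℕ) : Prop :=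
  ∃ (w : List ℕ) (d : ℕ), u = w ++ [d] ∧ S w ∧ ¬ S u ∧ t u ≠ none ∧ ctrl t w = some (!P)

/-! ### Basic lemmas on the signature orders -/

section SigOrder

variable {i k : ℕ} {P : Bool}

theorem sigEq.refl (σ : ℕ → Ordinal) : sigEq i k P σ σ := fun _ _ => rfl

theorem sigEq.symm {σ τ : ℕ → Ordinal} (h : sigEq i k P σ τ) : sigEq i k P τ σ :=
  fun j hj => (h j hj).symm

theorem sigEq.trans {σ τ ρ : ℕ → Ordinal} (h : sigEq i k P σ τ) (h' : sigEq i k P τ ρ) :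
    sigEq i k P σ ρ := fun j hj => (h j hj).trans (h' j hj)

theorem sigEq.le {σ τ : ℕ → Ordinal} (h : sigEq i k P σ τ) : sigLe i k P σ τ := Or.inr h

theorem sigLe_refl (σ : ℕ → Ordinal) : sigLe i k P σ σ := (sigEq.refl σ).le

theorem sigLt_of_lt_of_eq_below {σ τ : ℕ → Ordinal} {j : ℕ} (hj : PLosing i k P j)
    (hlt : σ j < τ j) (hbel : ∀ j', PLosing i k P j' → j' < j → σ j' = τ j') :
    sigLt i k P σ τ := ⟨j, hj, hlt, hbel⟩

theorem sigLt_asymm {σ τ : ℕ → Ordinal} (h : sigLt i k P σ τ) (h' : sigLt i k P τ σ) :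
    False := by
  obtain ⟨a, ha, halt, habel⟩ := h
  obtain ⟨b, hb, hblt, hbbel⟩ := h'
  rcases lt_trichotomy a b with hab | hab | hab
  · exact absurd (hbbel a ha hab).symm (ne_of_lt halt)
  · subst hab; exact absurd hblt (not_lt.2 halt.le)
  · exact absurd (habel b hb hab).symm (ne_of_lt hblt)

theorem sigLt_not_eq {σ τ : ℕ → Ordinal} (h : sigLt i k P σ τ) (h' : sigEq i k P σ τ) :
    False := by
  obtain ⟨a, ha, halt, _⟩ := h
  exact absurd (h' a ha) (ne_of_lt halt)

theorem sigLe_antisymm {σ τ : ℕ → Ordinal} (h : sigLe i k P σ τ) (h' : sigLe i k P τ σ) :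
    sigEq i k P σ τ := by
  rcases h with h | h
  · rcases h' with h' | h'
    · exact absurd h' (fun c => sigLt_asymm h c)
    · exact absurd h (fun c => sigLt_not_eq c h'.symm)
  · exact h

theorem sigLe_total (σ τ : ℕ → Ordinal) : sigLe i k P σ τ ∨ sigLe i k P τ σ := by
  classical
  by_cases hD : ∃ m, PLosing i k P m ∧ σ m ≠ τ m
  · set m0 := Nat.find hD with hm0
    obtain ⟨hP0, hne0⟩ := Nat.find_spec hD
    have hbel : ∀ j', PLosing i k P j' → j' < m0 → σ j' = τ j' := by
      intro j' hj' hlt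
      by_contra hne
      exact absurd (Nat.find_min hD hlt) (fun c => c ⟨hj', hne⟩)
    rcases lt_or_gt_of_ne hne0 with hlt | hlt
    · exact Or.inl (Or.inl ⟨m0, hP0, hlt, hbel⟩)
    · exact Or.inr (Or.inl ⟨m0, hP0, hlt, fun j' h1 h2 => (hbel j' h1 h2).symm⟩)
  · push_neg at hD
    exact Or.inl (Or.inr fun m hm => hD m hm)

theorem sigLe_of_not_le {σ τ : ℕ → Ordinal} (h : ¬ sigLe i k P σ τ) : sigLt i k P τ σ := by
  rcases sigLe_total (i := i) (k := k) (P := P) τ σ with h' | h'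
  · rcases h' with h' | h'
    · exact h'
    · exact absurd h'.symm.le h
  · exact absurd h' h

theorem sigLe_trans {σ τ ρ : ℕ → Ordinal} (h : sigLe i k P σ τ) (h' : sigLe i k P τ ρ) :
    sigLe i k P σ ρ := by
  rcases h with h | h <;> rcases h' with h' | h'
  · obtain ⟨a, ha, halt, habel⟩ := h
    obtain ⟨b, hb, hblt, hbbel⟩ := h'
    rcases lt_trichotomy a b with hab | hab | hab
    · exact Or.inl ⟨a, ha, halt.trans_eq (hbbel a ha hab), fun j' h1 h2 =>
        (habel j' h1 h2).trans (hbbel j' h1 (h2.trans hab))⟩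
    · subst hab
      exact Or.inl ⟨a, ha, halt.trans hblt, fun j' h1 h2 =>
        (habel j' h1 h2).trans (hbbel j' h1 h2)⟩
    · exact Or.inl ⟨b, hb, (habel b hb hab) ▸ hblt, fun j' h1 h2 =>
        (habel j' h1 (h2.trans hab)).trans (hbbel j' h1 h2)⟩
  · obtain ⟨a, ha, halt, habel⟩ := h
    exact Or.inl ⟨a, ha, halt.trans_eq (h' a ha), fun j' h1 h2 =>
      (habel j' h1 h2).trans (h' j' h1)⟩
  · obtain ⟨b, hb, hblt, hbbel⟩ := h'
    exact Or.inl ⟨b, hb, (h b hb) ▸ hblt, fun j' h1 h2 =>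
      (h j' h1).trans (hbbel j' h1 h2)⟩
  · exact (h.trans h').le

theorem sigLe_congr_left {σ σ' τ : ℕ → Ordinal} (he : sigEq i k P σ σ')
    (h : sigLe i k P σ τ) : sigLe i k P σ' τ := sigLe_trans he.symm.le h

theorem sigLe_congr_right {σ τ τ' : ℕ → Ordinal} (he : sigEq i k P τ τ')
    (h : sigLe i k P σ τ) : sigLe i k P σ τ' := sigLe_trans h he.le

end SigOrder
/-! ### Least upper bounds for the lexicographic order -/

section Lub

variable (i k : ℕ) (P : Bool)

/-- Candidate lex-lub of the values `f w`, `w ∈ W`. -/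
noncomputable def lubW (f : List ℕ → ℕ → Ordinal) (W : Set (List ℕ)) : ℕ → Ordinal :=
  (Nat.lt_wfRel.wf).fix (fun n g =>
    sSup ((fun w => f w n) ''
      {w | w ∈ W ∧ ∀ m, ∀ h : m < n, PLosing i k P m → f w m = g m h}))

theorem lubW_eq (f : List ℕ → ℕ → Ordinal) (W : Set (List ℕ)) (n : ℕ) :
    lubW i k P f W n = sSup ((fun w => f w n) ''
      {w | w ∈ W ∧ ∀ m, m < n → PLosing i k P m → f w m = lubW i k P f W m}) := by
  conv_lhs => rw [lubW, WellFounded.fix_eq]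
  rfl

theorem bddAbove_image_eval (f : List ℕ → ℕ → Ordinal) (A : Set (List ℕ)) (n : ℕ) :
    BddAbove ((fun w => f w n) '' A) := by
  have : Small.{0} A := small_subset (Set.subset_univ A)
  exact Ordinal.bddAbove_of_small

variable {i k P}

theorem lubW_isUB {f : List ℕ → ℕ → Ordinal} {W : Set (List ℕ)} {w : List ℕ}
    (hw : w ∈ W) : sigLe i k P (f w) (lubW i k P f W) := by
  classical
  set g := lubW i k P f W with hg
  by_cases hD : ∃ m, PLosing i k P m ∧ f w m ≠ g m
  · set m0 := Nat.find hD with hm0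
    obtain ⟨hP0, hne0⟩ := Nat.find_spec hD
    have hbel : ∀ m, m < m0 → PLosing i k P m → f w m = g m := by
      intro m hlt hm
      by_contra hne
      exact absurd (Nat.find_min hD hlt) (fun c => c ⟨hm, hne⟩)
    have hmem : f w m0 ∈ ((fun v => f v m0) ''
        {v | v ∈ W ∧ ∀ m, m < m0 → PLosing i k P m → f v m = g m}) :=
      ⟨w, ⟨hw, hbel⟩, rfl⟩
    have hle : f w m0 ≤ g m0 := by
      rw [hg, lubW_eq]
      exact le_csSup (bddAbove_image_eval f _ m0) hmem
    exact Or.inl ⟨m0, hP0, lt_of_le_of_ne hle hne0, fun j' h1 h2 => hbel j' h2 h1⟩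
  · push_neg at hD
    exact Or.inr fun m hm => hD m hm

theorem lubW_isLeast {f : List ℕ → ℕ → Ordinal} {W : Set (List ℕ)} {τ : ℕ → Ordinal}
    (hub : ∀ w ∈ W, sigLe i k P (f w) τ) : sigLe i k P (lubW i k P f W) τ := by
  classical
  set g := lubW i k P f W with hg
  by_cases hD : ∃ m, PLosing i k P m ∧ g m ≠ τ m
  · set m0 := Nat.find hD with hm0
    obtain ⟨hP0, hne0⟩ := Nat.find_spec hD
    have hbel : ∀ m, m < m0 → PLosing i k P m → g m = τ m := by
      intro m hlt hm
      by_contra hne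
      exact absurd (Nat.find_min hD hlt) (fun c => c ⟨hm, hne⟩)
    have hkey : ∀ x ∈ ((fun v => f v m0) ''
        {v | v ∈ W ∧ ∀ m, m < m0 → PLosing i k P m → f v m = g m}), x ≤ τ m0 := by
      rintro x ⟨v, ⟨hvW, hvbel⟩, rfl⟩
      have hagree : ∀ m, PLosing i k P m → m < m0 → f v m = τ m := by
        intro m hm hlt
        exact (hvbel m hlt hm).trans (hbel m hlt hm)
      rcases hub v hvW with hlt | heq
      · obtain ⟨c, hc, hclt, hcbel⟩ := hlt
        rcases lt_trichotomy c m0 with h1 | h1 | h1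
        · exact absurd (hagree c hc h1) (ne_of_lt hclt)
        · subst h1; exact hclt.le
        · exact (hcbel m0 hP0 h1).le
      · exact (heq m0 hP0).le
    have hle : g m0 ≤ τ m0 := by
      rw [hg, lubW_eq]
      by_cases hne : ((fun v => f v m0) ''
          {v | v ∈ W ∧ ∀ m, m < m0 → PLosing i k P m → f v m = g m}).Nonempty
      · exact csSup_le hne hkey
      · rw [Set.not_nonempty_iff_eq_empty.1 hne, csSup_empty]
        exact zero_le
    exact Or.inl ⟨m0, hP0, lt_of_le_of_ne hle hne0, fun j' h1 h2 => hbel j' h2 h1⟩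
  · push_neg at hD
    exact Or.inr fun m hm => hD m hm

end Lub
/-! ### Generic lemmas on strategies, branches and well-foundedness -/

section Generic

variable {i k : ℕ} {P : Bool} {t : Label} {S : List ℕ → Prop}

/-- The priority labelling a node (defaulting to 0). -/
def priAt (t : Label) (u : List ℕ) : ℕ := match t u with | some (Sym.pri m) => m | _ => 0

theorem priAt_eq {u : List ℕ} {m : ℕ} (h : t u = some (Sym.pri m)) : priAt t u = m := by
  simp [priAt, h]

theorem Active.pri (hA : Active t i k P S u) :
    t u = some (Sym.pri (priAt t u)) ∧ PLosing i k P (priAt t u) := by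
  obtain ⟨_, jj, hj, hl, _⟩ := hA
  rw [priAt_eq hj]; exact ⟨hj, hl⟩

theorem Active.anc (hA : Active t i k P S u) {w : List ℕ} (hp : w <+: u) (hne : w ≠ u) :
    t w ≠ some Sym.neg ∧ ∀ j', t w = some (Sym.pri j') → priAt t u ≤ j' := by
  obtain ⟨_, jj, hj, hl, h3⟩ := hA
  rw [priAt_eq hj]; exact h3 w hp hne

theorem Active.strat (hA : Active t i k P S u) : S u := hA.1

theorem ctrl_pri {u : List ℕ} {m : ℕ} (h : t u = some (Sym.pri m)) : ctrl t u = none := by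
  simp [ctrl, h]

theorem effPri_pri {u : List ℕ} {m : ℕ} (h : t u = some (Sym.pri m)) :
    effPri t u = some (if kept t u then m else m + 1) := by
  simp [effPri, h]

theorem effPri_some {u : List ℕ} {m : ℕ} (h : effPri t u = some m) :
    ∃ mm, t u = some (Sym.pri mm) ∧ (if kept t u then mm else mm + 1) = m := by
  unfold effPri at h
  rcases htu : t u with _ | s
  · rw [htu] at h; exact absurd h (by simp)
  · cases s with
    | pri mm => rw [htu] at h; exact ⟨mm, rfl, by simpa using h⟩
    | choice b => rw [htu] at h; exact absurd h (by simp)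
    | neg => rw [htu] at h; exact absurd h (by simp)

theorem strat_prefix (hS : IsStrategy t P S) {u v : List ℕ} (hu : S u) (hp : v <+: u) : S v := by
  obtain ⟨r, rfl⟩ := hp
  induction r using List.reverseRecOn with
  | nil => simpa using hu
  | append_singleton r d ih =>
    exact ih (hS.2.2.1 (v ++ r) d (by rw [List.append_assoc]; exact hu))

theorem strat_prefix' (hS : IsStrategy t P S) {v r : List ℕ} (hu : S (v ++ r)) : S v :=
  strat_prefix hS hu (List.prefix_append v r)

theorem step_zero (htree : IsTree t i k) (hS : IsStrategy t P S) {u x : List ℕ} {s0 : Sym}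
    (hts : t u = some s0) (har : s0.arity = 1) (hx : S x) (hp : u <+: x) (hne : u ≠ x) :
    u ++ [0] <+: x := by
  obtain ⟨r, rfl⟩ := hp
  cases r with
  | nil => exact absurd (by simp) hne
  | cons d r' =>
    have hSd : S (u ++ [d]) := by
      have : S ((u ++ [d]) ++ r') := by simpa using hx
      exact strat_prefix' hS this
    have htd : t (u ++ [d]) ≠ none := hS.2.1 _ hSd
    have hd : d < s0.arity := (htree.2.1 u s0 hts d).1 htd
    have hd0 : d = 0 := by omega
    subst hd0
    exact ⟨r', by simp⟩

theorem active_child (htree : IsTree t i k) (hS : IsStrategy t P S) {u : List ℕ}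
    (hA : Active t i k P S u) : S (u ++ [0]) := by
  have hpri := hA.pri.1
  have htd : t (u ++ [0]) ≠ none := by
    rw [(htree.2.1 u _ hpri 0)]; simp [Sym.arity]
  exact hS.2.2.2.2 u 0 hA.strat (by rw [ctrl_pri hpri]; simp) htd

/-! #### Prefix lemmas for `pref` -/

theorem pref_length (α : ℕ → ℕ) (n : ℕ) : (pref α n).length = n := by simp [pref]

theorem pref_getElem (α : ℕ → ℕ) {n m : ℕ} (h : m < n) :
    (pref α n)[m]'(by rw [pref_length]; exact h) = α m := by simp [pref]

theorem pref_take (α : ℕ → ℕ) {n m : ℕ} (h : m ≤ n) : (pref α n).take m = pref α m := by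
  unfold pref
  rw [← List.map_take, List.take_range, min_eq_left h]

theorem pref_prefix (α : ℕ → ℕ) {n m : ℕ} (h : m ≤ n) : pref α m <+: pref α n := by
  rw [← pref_take α h]; exact List.take_prefix _ _

theorem pref_ne (α : ℕ → ℕ) {n m : ℕ} (h : m ≠ n) : pref α m ≠ pref α n := by
  intro c
  exact h (by simpa [pref_length] using congrArg List.length c)

theorem kept_of_no_neg {α : ℕ → ℕ} {N : ℕ} (h : ∀ m, m < N → t (pref α m) ≠ some Sym.neg) :
    kept t (pref α N) := by
  unfold kept tildeCount
  rw [pref_length]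
  have : ∀ m ∈ List.range N, ¬ (decide (t ((pref α N).take m) = some Sym.neg) = true) := by
    intro m hm
    rw [List.mem_range] at hm
    rw [pref_take α hm.le]
    simpa using h m hm
  rw [List.countP_eq_zero.2 this]

/-! #### The well-founded relation associated with a winning strategy -/

/-- `v` is a proper extension of `u` in `S` with one of the two endpoints active. -/
def Rel (t : Label) (i k : ℕ) (P : Bool) (S : List ℕ → Prop) (v u : List ℕ) : Prop :=
  S u ∧ S v ∧ u <+: v ∧ u ≠ v ∧ (Active t i k P S u ∨ Active t i k P S v)

theorem chain_mono {f : ℕ → List ℕ} (hc : ∀ n, f n <+: f (n + 1)) :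
    ∀ {a b : ℕ}, a ≤ b → f a <+: f b := by
  intro a b h
  induction h with
  | refl => exact List.prefix_refl _
  | step _ ih => exact ih.trans (hc _)

theorem chain_length {f : ℕ → List ℕ} (hc : ∀ n, f n <+: f (n + 1) ∧ f n ≠ f (n + 1)) :
    ∀ n, n ≤ (f n).length := by
  have hstep : ∀ n, (f n).length < (f (n + 1)).length := fun n =>
    lt_of_le_of_ne (hc n).1.length_le (fun c => (hc n).2 ((hc n).1.eq_of_length c))
  intro n
  induction n with
  | zero => omega
  | succ n ih => have := hstep n; omega

theorem wf_of_no_chain {β : Type*} {r : β → β → Prop}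
    (h : ¬ ∃ f : ℕ → β, ∀ n, r (f (n + 1)) (f n)) : WellFounded r := by
  classical
  constructor
  intro a
  by_contra ha
  apply h
  have key : ∀ x : {x : β // ¬ Acc r x}, ∃ y : {x : β // ¬ Acc r x}, r y.1 x.1 := by
    rintro ⟨x, hx⟩
    by_contra hy
    push_neg at hy
    refine hx (Acc.intro x (fun y hyx => ?_))
    by_contra hacc
    exact hy ⟨y, hacc⟩ hyx
  let g : {x : β // ¬ Acc r x} → {x : β // ¬ Acc r x} := fun x => Classical.choose (key x)
  have hg : ∀ x, r (g x).1 x.1 := fun x => Classical.choose_spec (key x)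
  refine ⟨fun n => (g^[n] ⟨a, ha⟩).1, fun n => ?_⟩
  show r (g^[n+1] ⟨a, ha⟩).1 (g^[n] ⟨a, ha⟩).1
  rw [Function.iterate_succ_apply' g n _]
  exact hg _

theorem wfRel (htree : IsTree t i k) (hw : IsWinningStrategy t P S) :
    WellFounded (Rel t i k P S) := by
  apply wf_of_no_chain
  rintro ⟨f, hstep⟩
  have hc : ∀ n, f n <+: f (n + 1) ∧ f n ≠ f (n + 1) := fun n =>
    ⟨(hstep n).2.2.1, (hstep n).2.2.2.1⟩
  have hcm : ∀ {a b : ℕ}, a ≤ b → f a <+: f b := chain_mono (fun n => (hc n).1)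
  have hlen : ∀ n, n ≤ (f n).length := chain_length hc
  set α : ℕ → ℕ := fun m => (f (m + 1)).getD m 0 with hα
  -- `pref α N` recovers prefixes of the chain
  have hpref : ∀ {N n : ℕ}, N ≤ (f n).length → pref α N = (f n).take N := by
    intro N n hN
    apply List.ext_getElem
    · rw [pref_length, List.length_take]; omega
    · intro m hm1 hm2
      rw [pref_length] at hm1
      have hm1' : m < (f (m + 1)).length := lt_of_lt_of_le (Nat.lt_succ_self m) (hlen (m + 1))
      have hgd : α m = (f (m + 1))[m]'hm1' := List.getD_eq_getElem _ 0 hm1'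
      rw [pref_getElem α hm1, hgd]
      have hmn : m < (f n).length := by
        simp only [List.length_take] at hm2; omega
      simp only [List.getElem_take]
      rcases le_total (m + 1) n with hle | hle
      · exact (hcm hle).getElem hm1'
      · exact ((hcm hle).getElem hmn).symm
  have hprefself : ∀ n, pref α ((f n).length) = f n := by
    intro n; rw [hpref (le_refl _), List.take_length]
  have hplay : IsPlayOf S α := by
    intro N
    have h1 : N ≤ (f N).length := hlen N
    rw [hpref h1]
    exact strat_prefix hw.1 (hstep N).1 (List.take_prefix _ _)
  -- cofinally many active prefixes
  have hAP : ∀ M, ∃ N, M < N ∧ Active t i k P S (pref α N) := by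
    intro M
    rcases (hstep (M + 1)).2.2.2.2 with hA | hA
    · exact ⟨(f (M + 1)).length, lt_of_lt_of_le (Nat.lt_succ_self M) (hlen (M + 1)),
        (hprefself (M + 1)).symm ▸ hA⟩
    · exact ⟨(f (M + 2)).length, by have := hlen (M + 2); omega,
        (hprefself (M + 2)).symm ▸ hA⟩
  -- the limit priority
  have hJne : ∃ m, ∃ N, Active t i k P S (pref α N) ∧ priAt t (pref α N) = m := by
    obtain ⟨N, _, hA⟩ := hAP 0; exact ⟨_, N, hA, rfl⟩
  set J : Set ℕ := {m | ∃ N, Active t i k P S (pref α N) ∧ priAt t (pref α N) = m} with hJ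
  set js : ℕ := sInf J with hjs
  obtain ⟨Ns, hNsA, hNspri⟩ : js ∈ J := Nat.sInf_mem hJne
  have hlosing : PLosing i k P js := hNspri ▸ hNsA.pri.2
  have hdeep : ∀ N, Active t i k P S (pref α N) → Ns < N → priAt t (pref α N) = js := by
    intro N hA hNN
    have h1 : priAt t (pref α N) ≤ js := by
      rw [← hNspri]
      exact (hA.anc (pref_prefix α hNN.le) (pref_ne α (by omega))).2 _ hNsA.pri.1
    have h2 : js ≤ priAt t (pref α N) := Nat.sInf_le ⟨N, hA, rfl⟩
    omega
  have hnoneg : ∀ N, t (pref α N) ≠ some Sym.neg := by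
    intro N
    obtain ⟨N', hNN', hA'⟩ := hAP N
    exact (hA'.anc (pref_prefix α hNN'.le) (pref_ne α (by omega))).1
  have hkept : ∀ N, kept t (pref α N) := fun N => kept_of_no_neg (fun m _ => hnoneg m)
  -- js occurs infinitely often
  have hinfjs : InfOften t α js := by
    apply Set.infinite_of_forall_exists_gt
    intro a
    obtain ⟨N, hN, hA⟩ := hAP (max a Ns)
    refine ⟨N, ?_, lt_of_le_of_lt (le_max_left a Ns) hN⟩
    have hpri : t (pref α N) = some (Sym.pri js) :=
      hdeep N hA (lt_of_le_of_lt (le_max_right a Ns) hN) ▸ hA.pri.1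
    rw [Set.mem_setOf_eq, effPri_pri hpri, if_pos (hkept N)]
  -- nothing smaller occurs at all
  have hmin : ∀ m, m < js → ¬ InfOften t α m := by
    intro m hm hinf
    apply hinf
    have : {n | effPri t (pref α n) = some m} = ∅ := by
      ext N
      simp only [Set.mem_setOf_eq, Set.mem_empty_iff_false, iff_false]
      intro hN
      obtain ⟨mm, hmm, hval⟩ := effPri_some hN
      rw [if_pos (hkept N)] at hval
      subst hval
      obtain ⟨N', hNN', hA'⟩ := hAP (max N Ns)
      have hNlt : N < N' := lt_of_le_of_lt (le_max_left N Ns) hNN'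
      have : js ≤ mm := by
        rw [← hdeep N' hA' (lt_of_le_of_lt (le_max_right N Ns) hNN')]
        exact (hA'.anc (pref_prefix α hNlt.le) (pref_ne α (by omega))).2 _ hmm
      omega
    rw [this]
    exact Set.finite_empty
  -- contradiction with winning
  obtain ⟨jw, hjwinf, hjwmin, hjwpar⟩ := hw.2 α hplay
  have hjwjs : jw = js := by
    have h1 : ¬ js < jw := fun c => hjwmin js c hinfjs
    have h2 : ¬ jw < js := fun c => hmin jw c hjwinf
    omega
  rw [hjwjs] at hjwpar
  obtain ⟨_, _, hodd⟩ := hlosing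
  cases P with
  | true =>
    have h1 : Odd js := hodd.2 rfl
    have h2 : Even js := hjwpar.2 rfl
    exact (Nat.not_odd_iff_even.2 h2) h1
  | false =>
    have h1 : ¬ Odd js := fun c => by simpa using hodd.1 c
    have h2 : ¬ Even js := fun c => by simpa using hjwpar.1 c
    exact h2 (Nat.not_odd_iff_even.1 h1)

end Generic
/-! ### Existence of a signature assignment for a winning strategy -/

section Exists

variable {i k : ℕ} {P : Bool} {t : Label} {S : List ℕ → Prop}

theorem rel_child (htree : IsTree t i k) (hS : IsStrategy t P S) {u : List ℕ}
    (hA : Active t i k P S u) : Rel t i k P S (u ++ [0]) u :=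
  ⟨hA.strat, active_child htree hS hA, List.prefix_append _ _,
    fun c => by simpa using congrArg List.length c, Or.inl hA⟩

theorem rel_suk {u v : List ℕ} (hSu : S u) (hnA : ¬ Active t i k P S u)
    (hv : Suk t i k P S u v) : Rel t i k P S v u := by
  obtain ⟨hAv, hp, _⟩ := hv
  exact ⟨hSu, hAv.strat, hp, fun c => hnA (c ▸ hAv), Or.inr hAv⟩

theorem exists_sigDef (htree : IsTree t i k) (hw : IsWinningStrategy t P S) :
    ∃ s, SigDef t i k P S s := by
  classical
  have wf := wfRel htree hw
  set F : ∀ u : List ℕ, (∀ v, Rel t i k P S v u → ℕ → Ordinal) → ℕ → Ordinal :=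
    fun u IH =>
      if hA : Active t i k P S u then
        (fun j' => if j' < priAt t u then IH (u ++ [0]) (rel_child htree hw.1 hA) j'
          else if j' = priAt t u then IH (u ++ [0]) (rel_child htree hw.1 hA) (priAt t u) + 1
          else 0)
      else if hSu : S u then
        lubW i k P (fun v n => if h : Rel t i k P S v u then IH v h n else 0)
          {v | Suk t i k P S u v}
      else fun _ => 0
    with hF
  set s : List ℕ → ℕ → Ordinal := wf.fix F with hs
  have hfix : ∀ u, s u = F u (fun v _ => s v) := by
    intro u
    rw [hs]
    exact WellFounded.fix_eq wf F u
  refine ⟨s, ?_, ?_⟩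
  · intro u jj hA hpri j' hP
    have hpa : priAt t u = jj := priAt_eq hpri
    have hrw : s u = fun j' => if j' < jj then s (u ++ [0]) j'
        else if j' = jj then s (u ++ [0]) jj + 1 else 0 := by
      rw [hfix, hF]
      simp only [dif_pos hA, hpa]
    refine ⟨fun h => ?_, fun h => ?_, fun h => ?_⟩
    · rw [hrw]; simp only [if_pos h]
    · rw [hrw]; subst h; simp
    · rw [hrw]; simp only [if_neg (by omega : ¬ j' < jj), if_neg (by omega : ¬ j' = jj)]
  · intro u hSu hnA
    have hrw : s u = lubW i k P (fun v n => if h : Rel t i k P S v u then s v n else 0)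
        {v | Suk t i k P S u v} := by
      rw [hfix, hF]
      simp only [dif_neg hnA, dif_pos hSu]
    constructor
    · intro w hwsuk
      have h1 : (fun n => if h : Rel t i k P S w u then s w n else 0) = s w :=
        funext fun n => dif_pos (rel_suk hSu hnA hwsuk)
      have := lubW_isUB (i := i) (k := k) (P := P)
        (f := fun v n => if h : Rel t i k P S v u then s v n else 0)
        (W := {v | Suk t i k P S u v}) hwsuk
      rw [hrw]
      simpa only [h1] using this
    · intro τ hub
      rw [hrw]
      apply lubW_isLeast
      intro v hv
      have h1 : (fun n => if h : Rel t i k P S v u then s v n else 0) = s v :=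
        funext fun n => dif_pos (rel_suk hSu hnA hv)
      rw [h1]
      exact hub v hv

end Exists
/-! ### Monotonicity of signature assignments, truncation -/

section Mono

variable {i k : ℕ} {P : Bool} {t : Label} {S : List ℕ → Prop} {s : List ℕ → ℕ → Ordinal}

theorem sig_child_le (hsig : SigDef t i k P S s) {u : List ℕ}
    (hA : Active t i k P S u) : sigLe i k P (s (u ++ [0])) (s u) := by
  have hpri := hA.pri.1
  have hlos := hA.pri.2
  have facts := hsig.1 u (priAt t u) hA hpri
  refine Or.inl ⟨priAt t u, hlos, ?_, ?_⟩
  · rw [(facts _ hlos).2.1 rfl, Ordinal.add_one_eq_succ]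
    exact Order.lt_succ _
  · intro j' h1 h2
    exact ((facts j' h1).1 h2).symm

theorem sig_mono (htree : IsTree t i k) (hw : IsWinningStrategy t P S)
    (hsig : SigDef t i k P S s) :
    ∀ u, S u → ∀ x, S x → u <+: x → sigLe i k P (s x) (s u) := by
  intro u
  induction u using (wfRel htree hw).induction with
  | _ u IH =>
  intro hSu x hSx hp
  by_cases hux : u = x
  · subst hux; exact sigLe_refl _
  by_cases hA : Active t i k P S u
  · have hpri := hA.pri.1
    have hch : u ++ [0] <+: x := step_zero htree hw.1 hpri rfl hSx hp hux
    have hS0 : S (u ++ [0]) := active_child htree hw.1 hA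
    exact sigLe_trans (IH (u ++ [0]) (rel_child htree hw.1 hA) hS0 x hSx hch)
      (sig_child_le hsig hA)
  · by_cases hex : ∃ v, Active t i k P S v ∧ u <+: v ∧ v ≠ u ∧ v <+: x
    · have hEne : ∃ n, ∃ v, v.length = n ∧ Active t i k P S v ∧ u <+: v ∧ v ≠ u ∧ v <+: x := by
        obtain ⟨v, h1, h2, h3, h4⟩ := hex; exact ⟨_, v, rfl, h1, h2, h3, h4⟩
      obtain ⟨v0, hlen0, hAv0, hpv0, hnev0, hpv0x⟩ := Nat.sInf_mem hEne
      have hsuk : Suk t i k P S u v0 := by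
        refine ⟨hAv0, hpv0, ?_⟩
        intro w' hw'A hw'up hw'pv0
        have hw'ne : w' ≠ u := fun e => hA (e ▸ hw'A)
        have hmem : w'.length ∈ {n | ∃ v, v.length = n ∧ Active t i k P S v ∧ u <+: v ∧
            v ≠ u ∧ v <+: x} := ⟨w', rfl, hw'A, hw'up, hw'ne, hw'pv0.trans hpv0x⟩
        have hge : v0.length ≤ w'.length := hlen0 ▸ Nat.sInf_le hmem
        exact hw'pv0.eq_of_length (le_antisymm hw'pv0.length_le hge)
      exact sigLe_trans
        (IH v0 (rel_suk hSu hA hsuk) hAv0.strat x hSx hpv0x)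
        ((hsig.2 u hSu hA).1 v0 hsuk)
    · push_neg at hex
      have hnAx : ¬ Active t i k P S x := fun c =>
        hex x c hp (fun e => hux e.symm) (List.prefix_refl x)
      apply (hsig.2 x hSx hnAx).2 (s u)
      intro v hv
      have hsuk : Suk t i k P S u v := by
        refine ⟨hv.1, hp.trans hv.2.1, ?_⟩
        intro w' hw'A hw'up hw'pv
        have hw'ne : w' ≠ u := fun e => hA (e ▸ hw'A)
        rcases List.prefix_or_prefix_of_prefix hw'pv hv.2.1 with hc | hc
        · exact absurd hc (hex w' hw'A hw'up hw'ne)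
        · exact hv.2.2 w' hw'A hc hw'pv
      exact (hsig.2 u hSu hA).1 v hsuk
  
end Mono

section Trunc

variable {i k : ℕ} {P : Bool}

/-- Truncation: zero out all coordinates `≥ j`. -/
def truncJ (j : ℕ) (σ : ℕ → Ordinal) : ℕ → Ordinal := fun m => if m < j then σ m else 0

theorem truncJ_mono {j : ℕ} {σ τ : ℕ → Ordinal} (h : sigLe i k P σ τ) :
    sigLe i k P (truncJ j σ) (truncJ j τ) := by
  rcases h with ⟨c, hc, hclt, hcbel⟩ | h
  · by_cases hcj : c < j
    · refine Or.inl ⟨c, hc, ?_, ?_⟩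
      · simpa [truncJ, if_pos hcj] using hclt
      · intro j' h1 h2
        simp only [truncJ]
        split
        · exact hcbel j' h1 h2
        · rfl
    · refine Or.inr ?_
      intro m hm
      simp only [truncJ]
      split
      · exact hcbel m hm (by omega)
      · rfl
  · refine Or.inr ?_
    intro m hm
    simp only [truncJ]
    split
    · exact h m hm
    · rfl

end Trunc
/-! ### The tree `p_j(t)` -/

section Node1

variable {i k : ℕ} {P : Bool} {t : Label} {j : ℕ}

local notation "t'" => node1 (Sym.pri j) t

theorem t'_nil : t' [] = some (Sym.pri j) := rfl

theorem t'_cons (w : List ℕ) : t' (0 :: w) = t w := rfl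

theorem t'_succ (d : ℕ) (w : List ℕ) : t' ((d + 1) :: w) = none := rfl

theorem node1_pri_isTree (ht : IsTree t i k) (hij : i ≤ j) (hjk : j ≤ k) :
    IsTree t' i k := by
  refine ⟨by simp [node1], ?_, ?_, ?_⟩
  · intro u s hu d
    match u with
    | [] =>
      simp only [node1] at hu
      cases hu
      show t' ([] ++ [d]) ≠ none ↔ d < 1
      match d with
      | 0 => exact ⟨fun _ => Nat.one_pos, fun _ => ht.1⟩
      | d + 1 => simp [t'_succ]
    | 0 :: w =>
      show t' (0 :: (w ++ [d])) ≠ none ↔ _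
      rw [t'_cons]
      exact ht.2.1 w s hu d
    | (d' + 1) :: w => simp [t'_succ] at hu
  · intro u d hu
    match u with
    | [] => simp [node1] at hu
    | 0 :: w =>
      show t' (0 :: (w ++ [d])) = none
      rw [t'_cons]
      exact ht.2.2.1 w d hu
    | (d' + 1) :: w => rfl
  · intro u m hu
    match u with
    | [] =>
      simp only [node1, Option.some_inj, Sym.pri.injEq] at hu
      omega
    | 0 :: w => exact ht.2.2.2 w m hu
    | (d' + 1) :: w => simp [t'_succ] at hu

theorem tilde_shift (w : List ℕ) : tildeCount t' (0 :: w) = tildeCount t w := by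
  unfold tildeCount
  simp only [List.length_cons, List.range_succ_eq_map, List.countP_cons, List.countP_map,
    List.take_zero]
  have h0 : ¬ (decide (t' ([] : List ℕ) = some Sym.neg) = true) := by simp [node1]
  show _ + (if decide (t' ([] : List ℕ) = some Sym.neg) = true then 1 else 0) = _
  rw [if_neg h0, Nat.add_zero]
  apply List.countP_congr
  intro m hm
  simp only [Function.comp_apply]
  rw [List.take_succ_cons, t'_cons]

theorem kept_shift (w : List ℕ) : kept t' (0 :: w) ↔ kept t w := by
  unfold kept; rw [tilde_shift]

theorem kept_nil : kept t' [] := by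
  unfold kept tildeCount; simp

theorem ctrl_shift (w : List ℕ) : ctrl t' (0 :: w) = ctrl t w := by
  unfold ctrl
  rw [t'_cons]
  rcases htw : t w with _ | s
  · rfl
  · cases s with
    | choice Q =>
      show some (if kept t' (0 :: w) then Q else !Q) = some (if kept t w then Q else !Q)
      congr 1
      exact if_congr (kept_shift w) rfl rfl
    | pri m => rfl
    | neg => rfl

theorem effPri_shift (w : List ℕ) : effPri t' (0 :: w) = effPri t w := by
  unfold effPri
  rw [t'_cons]
  rcases htw : t w with _ | s
  · rfl
  · cases s with
    | pri m =>
      show some (if kept t' (0 :: w) then m else m + 1) = some (if kept t w then m else m + 1)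
      congr 1
      exact if_congr (kept_shift w) rfl rfl
    | choice Q => rfl
    | neg => rfl

theorem prefix_cons_cases {v w : List ℕ} (h : v <+: 0 :: w) :
    v = [] ∨ ∃ w', v = 0 :: w' ∧ w' <+: w := by
  match v with
  | [] => exact Or.inl rfl
  | a :: v' =>
    rw [List.cons_prefix_cons] at h
    exact Or.inr ⟨v', by rw [h.1], h.2⟩

theorem plosing_ne (hj : PWinning i k P j) {m : ℕ} (hm : PLosing i k P m) : m ≠ j := by
  rintro rfl
  exact hj.2.2 hm.2.2

variable {S'' : List ℕ → Prop} {S : List ℕ → Prop}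

theorem active_root (hj : PWinning i k P j) : ¬ Active t' i k P S'' [] := by
  rintro ⟨_, jj, hjj, hl, _⟩
  rw [t'_nil, Option.some_inj, Sym.pri.injEq] at hjj
  exact plosing_ne hj hl hjj.symm

theorem active_shape (hj : PWinning i k P j) {v : List ℕ}
    (hA : Active t' i k P S'' v) : ∃ w, v = 0 :: w := by
  match v with
  | [] => exact absurd hA (active_root hj)
  | 0 :: w => exact ⟨w, rfl⟩
  | (d + 1) :: w =>
    obtain ⟨_, jj, hjj, _⟩ := hA
    rw [t'_succ] at hjj
    cases hjj

theorem active_pri_lt (hj : PWinning i k P j) {v : List ℕ}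
    (hA : Active t' i k P S'' v) : priAt t' v < j := by
  obtain ⟨w, rfl⟩ := active_shape hj hA
  have h1 := (hA.anc (List.nil_prefix) (by simp)).2 j t'_nil
  have h2 : priAt t' (0 :: w) ≠ j := plosing_ne hj hA.pri.2
  omega

theorem active_down (hj : PWinning i k P j) (hrest : ∀ w, S'' (0 :: w) ↔ S w) {w : List ℕ}
    (hA : Active t' i k P S'' (0 :: w)) : Active t i k P S w ∧ priAt t w < j := by
  obtain ⟨hS, jj, hjj, hl, h3⟩ := hA
  rw [t'_cons] at hjj
  have hlt : priAt t w < j := by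
    have := active_pri_lt hj (S'' := S'') ⟨hS, jj, t'_cons w ▸ hjj, hl, h3⟩
    rwa [priAt_eq ((t'_cons w).trans hjj), ← priAt_eq hjj] at this
  refine ⟨⟨(hrest w).1 hS, jj, hjj, hl, ?_⟩, hlt⟩
  intro w' hp hne
  have := h3 (0 :: w') (by rw [List.cons_prefix_cons]; exact ⟨rfl, hp⟩)
    (by simpa using hne)
  rw [t'_cons] at this
  exact this

theorem active_up (hj : PWinning i k P j) (hrest : ∀ w, S'' (0 :: w) ↔ S w) {w : List ℕ}
    (hA : Active t i k P S w) (hlt : priAt t w < j) : Active t' i k P S'' (0 :: w) := by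
  obtain ⟨hS, jj, hjj, hl, h3⟩ := hA
  have hjjlt : jj < j := by rwa [priAt_eq hjj] at hlt
  refine ⟨(hrest w).2 hS, jj, (t'_cons w).trans hjj, hl, ?_⟩
  intro w' hp hne
  rcases prefix_cons_cases hp with rfl | ⟨w'', rfl, hp'⟩
  · rw [t'_nil]
    refine ⟨by simp, ?_⟩
    intro j' he
    simp only [Option.some_inj, Sym.pri.injEq] at he
    omega
  · rw [t'_cons]
    exact h3 w'' hp' (by simpa using hne)

/-! #### High coordinates vanish in `p_j(t)` -/

theorem high_zero (hj : PWinning i k P j) {s' : List ℕ → ℕ → Ordinal}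
    (hsig' : SigDef t' i k P S'' s') :
    ∀ u, S'' u → ∀ m, PLosing i k P m → j ≤ m → s' u m = 0 := by
  intro u hu m hm hjm
  by_cases hA : Active t' i k P S'' u
  · exact (hsig'.1 u (priAt t' u) hA hA.pri.1 m hm).2.2
      (lt_of_lt_of_le (active_pri_lt hj hA) hjm)
  · -- `truncJ j (s' u)` is also an upper bound of the active descendants
    have hub : ∀ v, Suk t' i k P S'' u v → sigLe i k P (s' v) (truncJ j (s' u)) := by
      intro v hv
      have hvz : ∀ m', PLosing i k P m' → j ≤ m' → s' v m' = 0 := fun m' hm' hjm' =>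
        (hsig'.1 v (priAt t' v) hv.1 hv.1.pri.1 m' hm').2.2
          (lt_of_lt_of_le (active_pri_lt hj hv.1) hjm')
      rcases (hsig'.2 u hu hA).1 v hv with ⟨c, hc, hclt, hcbel⟩ | he
      · by_cases hcj : c < j
        · exact Or.inl ⟨c, hc, by simpa [truncJ, if_pos hcj] using hclt,
            fun m' h1 h2 => by
              simp only [truncJ]
              split
              · exact hcbel m' h1 h2
              · exact hvz m' h1 (by omega)⟩
        · refine Or.inr ?_
          intro m' hm'
          simp only [truncJ]
          split
          · exact hcbel m' hm' (by omega)
          · exact hvz m' hm' (by omega)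
      · refine Or.inr ?_
        intro m' hm'
        simp only [truncJ]
        split
        · exact he m' hm'
        · exact hvz m' hm' (by omega)
    have hle := (hsig'.2 u hu hA).2 _ hub
    rcases hle with ⟨c, hc, hclt, _⟩ | he
    · by_cases hcj : c < j
      · simp only [truncJ, if_pos hcj] at hclt
        exact absurd hclt (lt_irrefl _)
      · simp only [truncJ, if_neg hcj] at hclt
        exact absurd hclt (by simp)
    · have := he m hm
      simpa [truncJ, if_neg (by omega : ¬ m < j)] using this

/-! #### The root has the same value as its child -/

theorem suk_all_ext (hj : PWinning i k P j) {v : List ℕ}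
    (hA : Active t' i k P S'' v) : [0] <+: v := by
  obtain ⟨w, rfl⟩ := active_shape hj hA
  rw [List.cons_prefix_cons]
  exact ⟨rfl, List.nil_prefix⟩

theorem root_eq_child (ht : IsTree t i k) (hj : PWinning i k P j)
    (hS'' : IsStrategy t' P S'') {s' : List ℕ → ℕ → Ordinal}
    (hsig' : SigDef t' i k P S'' s') : sigEq i k P (s' []) (s' [0]) := by
  have hnA : ¬ Active t' i k P S'' [] := active_root hj
  have hS0 : S'' [0] := by
    have := hS''.2.2.2.2 [] 0 hS''.1 (by rw [show ctrl t' [] = none from rfl]; simp)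
      (by show t' [0] ≠ none; simpa [node1] using ht.1)
    simpa using this
  by_cases hA0 : Active t' i k P S'' [0]
  · have hSukiff : ∀ v, Suk t' i k P S'' [] v ↔ v = [0] := by
      intro v
      constructor
      · rintro ⟨hAv, _, hmin⟩
        exact (hmin [0] hA0 (List.nil_prefix) (suk_all_ext hj hAv)).symm
      · rintro rfl
        refine ⟨hA0, List.nil_prefix, ?_⟩
        intro w' hw'A _ hw'p
        rcases prefix_cons_cases hw'p with rfl | ⟨w'', rfl, hp'⟩
        · exact absurd hw'A (active_root hj)
        · rw [List.prefix_nil] at hp'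
          rw [hp']
    apply sigLe_antisymm
    · apply (hsig'.2 [] hS''.1 hnA).2
      intro v hv
      rw [hSukiff v] at hv
      subst hv
      exact sigLe_refl _
    · exact (hsig'.2 [] hS''.1 hnA).1 [0] ((hSukiff [0]).2 rfl)
  · have hSukiff : ∀ v, Suk t' i k P S'' [] v ↔ Suk t' i k P S'' [0] v := by
      intro v
      constructor
      · rintro ⟨hAv, _, hmin⟩
        exact ⟨hAv, suk_all_ext hj hAv, fun w' h1 h2 h3 => hmin w' h1 (List.nil_prefix) h3⟩
      · rintro ⟨hAv, hpv, hmin⟩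
        refine ⟨hAv, List.nil_prefix, ?_⟩
        intro w' h1 _ h3
        exact hmin w' h1 (suk_all_ext hj h1) h3
    apply sigLe_antisymm
    · apply (hsig'.2 [] hS''.1 hnA).2
      intro v hv
      exact (hsig'.2 [0] hS0 hA0).1 v ((hSukiff v).1 hv)
    · apply (hsig'.2 [0] hS0 hA0).2
      intro v hv
      exact (hsig'.2 [] hS''.1 hnA).1 v ((hSukiff v).2 hv)

end Node1
/-! ### Transfer of strategies and winning between `t` and `p_j(t)` -/

section Transfer

variable {i k : ℕ} {P : Bool} {t : Label} {j : ℕ}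

local notation "t'" => node1 (Sym.pri j) t

variable {S S'' : List ℕ → Prop}

/-- The lift of a strategy of `G(t)` to `G(p_j(t))`. -/
def liftS (S : List ℕ → Prop) : List ℕ → Prop := fun u => u = [] ∨ ∃ w, u = 0 :: w ∧ S w

theorem liftS_nil : liftS S [] := Or.inl rfl

theorem liftS_cons {w : List ℕ} : liftS S (0 :: w) ↔ S w := by
  constructor
  · rintro (h | ⟨w', hw', hS⟩)
    · cases h
    · injection hw' with h1 h2
      subst h2
      exact hS
  · intro h; exact Or.inr ⟨w, rfl, h⟩

theorem liftS_succ {d : ℕ} {w : List ℕ} : ¬ liftS S ((d + 1) :: w) := by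
  rintro (h | ⟨w', hw', _⟩)
  · cases h
  · rw [List.cons.injEq] at hw'; omega

theorem ctrl_nil' : ctrl t' [] = none := rfl

theorem lift_strategy (ht : IsTree t i k) (hS : IsStrategy t P S) :
    IsStrategy t' P (liftS S) := by
  refine ⟨liftS_nil, ?_, ?_, ?_, ?_⟩
  · rintro u (rfl | ⟨w, rfl, hw⟩)
    · simp [node1]
    · rw [t'_cons]; exact hS.2.1 w hw
  · intro u d hu
    match u with
    | [] => exact liftS_nil
    | 0 :: u' =>
      rw [show (0 :: u') ++ [d] = 0 :: (u' ++ [d]) from rfl, liftS_cons] at hu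
      exact liftS_cons.2 (hS.2.2.1 u' d hu)
    | (a + 1) :: u' =>
      exact absurd hu (by rw [show ((a+1) :: u') ++ [d] = (a+1) :: (u' ++ [d]) from rfl]
                          exact liftS_succ)
  · rintro u (rfl | ⟨w, rfl, hw⟩) hc
    · rw [ctrl_nil'] at hc; cases hc
    · rw [ctrl_shift] at hc
      obtain ⟨d, hd, hun⟩ := hS.2.2.2.1 w hw hc
      refine ⟨d, (liftS_cons (w := w ++ [d])).2 hd, ?_⟩
      intro d' hd'
      exact hun d' ((liftS_cons (w := w ++ [d'])).1 hd')
  · rintro u d (rfl | ⟨w, rfl, hw⟩) hc htd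
    · match d with
      | 0 => exact Or.inr ⟨[], rfl, hS.1⟩
      | d + 1 => exact absurd (show t' ([(d+1)]) = none from rfl) (by simpa using htd)
    · rw [show (0 :: w) ++ [d] = 0 :: (w ++ [d]) from rfl] at htd ⊢
      rw [liftS_cons]
      rw [t'_cons] at htd
      exact hS.2.2.2.2 w d hw (by rwa [ctrl_shift] at hc) htd

theorem restrict_root (ht : IsTree t i k) (hS'' : IsStrategy t' P S'') : S'' [0] := by
  have := hS''.2.2.2.2 [] 0 hS''.1 (by rw [ctrl_nil']; simp)
    (by show t' [0] ≠ none; simpa [node1] using ht.1)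
  simpa using this

theorem restrict_strategy (ht : IsTree t i k) (hS'' : IsStrategy t' P S'') :
    IsStrategy t P (fun w => S'' (0 :: w)) := by
  refine ⟨restrict_root ht hS'', ?_, ?_, ?_, ?_⟩
  · intro w hw
    have := hS''.2.1 (0 :: w) hw
    rwa [t'_cons] at this
  · intro w d hw
    exact hS''.2.2.1 (0 :: w) d hw
  · intro w hw hc
    have hc' : ctrl t' (0 :: w) = some P := by rw [ctrl_shift]; exact hc
    obtain ⟨d, hd, hun⟩ := hS''.2.2.2.1 (0 :: w) hw hc'
    exact ⟨d, hd, fun d' hd' => hun d' hd'⟩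
  · intro w d hw hc htd
    exact hS''.2.2.2.2 (0 :: w) d hw (by rwa [ctrl_shift]) htd

/-! #### Branch transfer -/

theorem pref_succ_eq {α β : ℕ → ℕ} (h0 : α 0 = 0) (hs : ∀ n, α (n + 1) = β n) (n : ℕ) :
    pref α (n + 1) = 0 :: pref β n := by
  unfold pref
  rw [List.range_succ_eq_map, List.map_cons, h0, List.map_map]
  congr 1
  exact List.map_congr_left (fun m _ => hs m)

theorem shift_infinite {A B : Set ℕ} (h : ∀ n, (n + 1) ∈ A ↔ n ∈ B) :
    A.Infinite ↔ B.Infinite := by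
  constructor
  · intro hA
    have h2 : (A \ {0}).Infinite := hA.diff (Set.finite_singleton 0)
    apply Set.Infinite.of_image Nat.succ
    apply Set.Infinite.mono ?_ h2
    rintro x ⟨hx, hx0⟩
    obtain ⟨y, rfl⟩ : ∃ y, x = y + 1 := ⟨x - 1, by simp at hx0; omega⟩
    exact ⟨y, (h y).1 hx, rfl⟩
  · intro hB
    apply Set.Infinite.mono ?_ (hB.image (f := Nat.succ)
      (fun a _ b _ hab => Nat.succ_injective hab))
    rintro x ⟨y, hy, rfl⟩
    exact (h y).2 hy

theorem wins_shift {α β : ℕ → ℕ} (h0 : α 0 = 0) (hs : ∀ n, α (n + 1) = β n) :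
    WinsBranch t' P α ↔ WinsBranch t P β := by
  have hio : ∀ m, InfOften t' α m ↔ InfOften t β m := by
    intro m
    apply shift_infinite
    intro n
    show effPri t' (pref α (n + 1)) = some m ↔ effPri t (pref β n) = some m
    rw [pref_succ_eq h0 hs n, effPri_shift]
  constructor
  · rintro ⟨jw, h1, h2, h3⟩
    exact ⟨jw, (hio jw).1 h1, fun j' hj' c => h2 j' hj' ((hio j').2 c), h3⟩
  · rintro ⟨jw, h1, h2, h3⟩
    exact ⟨jw, (hio jw).2 h1, fun j' hj' c => h2 j' hj' ((hio j').1 c), h3⟩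

theorem lift_winning (ht : IsTree t i k) (hw : IsWinningStrategy t P S) :
    IsWinningStrategy t' P (liftS S) := by
  refine ⟨lift_strategy ht hw.1, ?_⟩
  intro α hplay
  have h1 : pref α 1 = [α 0] := by simp [pref, List.range_succ]
  have h0 : α 0 = 0 := by
    have := hplay 1
    rw [h1] at this
    rcases this with h | ⟨w, hw', _⟩
    · cases h
    · rw [List.cons.injEq] at hw'; exact hw'.1
  set β : ℕ → ℕ := fun n => α (n + 1) with hβ
  have hs : ∀ n, α (n + 1) = β n := fun n => rfl
  have hplayβ : IsPlayOf S β := by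
    intro n
    have := hplay (n + 1)
    rw [pref_succ_eq h0 hs n, liftS_cons] at this
    exact this
  exact (wins_shift h0 hs).2 (hw.2 β hplayβ)

theorem restrict_winning (ht : IsTree t i k) (hw : IsWinningStrategy t' P S'') :
    IsWinningStrategy t P (fun w => S'' (0 :: w)) := by
  refine ⟨restrict_strategy ht hw.1, ?_⟩
  intro β hplay
  set α : ℕ → ℕ := fun n => match n with | 0 => 0 | m + 1 => β m with hα
  have h0 : α 0 = 0 := rfl
  have hs : ∀ n, α (n + 1) = β n := fun n => rfl
  have hplayα : IsPlayOf S'' α := by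
    intro n
    match n with
    | 0 => exact hw.1.1
    | n + 1 =>
      rw [pref_succ_eq h0 hs n]
      exact hplay n
  exact (wins_shift h0 hs).1 (hw.2 α hplayα)

end Transfer
/-! ### Skipping a non-active priority node -/

section Skip

variable {i k : ℕ} {P : Bool} {t : Label} {S : List ℕ → Prop} {s : List ℕ → ℕ → Ordinal}

theorem pri_child (htree : IsTree t i k) (hS : IsStrategy t P S) {u : List ℕ} {m : ℕ}
    (hSu : S u) (hpri : t u = some (Sym.pri m)) : S (u ++ [0]) := by
  have htd : t (u ++ [0]) ≠ none := by
    rw [(htree.2.1 u _ hpri 0)]; simp [Sym.arity]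
  exact hS.2.2.2.2 u 0 hSu (by rw [ctrl_pri hpri]; simp) htd

theorem skip_node (htree : IsTree t i k) (hS : IsStrategy t P S)
    (hsig : SigDef t i k P S s) {u : List ℕ} {m : ℕ} (hSu : S u)
    (hnA : ¬ Active t i k P S u) (hpri : t u = some (Sym.pri m)) :
    sigEq i k P (s u) (s (u ++ [0])) := by
  have hS0 : S (u ++ [0]) := pri_child htree hS hSu hpri
  have hstep : ∀ v, Suk t i k P S u v → u ++ [0] <+: v := by
    intro v hv
    exact step_zero htree hS hpri rfl hv.1.strat hv.2.1 (fun e => hnA (e ▸ hv.1))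
  by_cases hA0 : Active t i k P S (u ++ [0])
  · have hSukiff : ∀ v, Suk t i k P S u v ↔ v = u ++ [0] := by
      intro v
      constructor
      · intro hv
        exact (hv.2.2 (u ++ [0]) hA0 (List.prefix_append u [0]) (hstep v hv)).symm
      · rintro rfl
        refine ⟨hA0, List.prefix_append u [0], ?_⟩
        intro w' hw'A hw'up hw'p
        have hw'ne : w' ≠ u := fun e => hnA (e ▸ hw'A)
        have h' : u ++ [0] <+: w' :=
          step_zero htree hS hpri rfl hw'A.strat hw'up (fun e => hw'ne e.symm)
        exact hw'p.eq_of_length (le_antisymm hw'p.length_le h'.length_le)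
    apply sigLe_antisymm
    · apply (hsig.2 u hSu hnA).2
      intro v hv
      rw [hSukiff v] at hv
      subst hv
      exact sigLe_refl _
    · exact (hsig.2 u hSu hnA).1 (u ++ [0]) ((hSukiff _).2 rfl)
  · have hSukiff : ∀ v, Suk t i k P S u v ↔ Suk t i k P S (u ++ [0]) v := by
      intro v
      constructor
      · intro hv
        exact ⟨hv.1, hstep v hv, fun w' h1 h2 h3 =>
          hv.2.2 w' h1 ((List.prefix_append u [0]).trans h2) h3⟩
      · rintro ⟨hAv, hpv, hmin⟩
        refine ⟨hAv, (List.prefix_append u [0]).trans hpv, ?_⟩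
        intro w' h1 h2 h3
        have hw'ne : w' ≠ u := fun e => hnA (e ▸ h1)
        exact hmin w' h1
          (step_zero htree hS hpri rfl h1.strat h2 (fun e => hw'ne e.symm)) h3
    apply sigLe_antisymm
    · apply (hsig.2 u hSu hnA).2
      intro v hv
      exact (hsig.2 (u ++ [0]) hS0 hA0).1 v ((hSukiff v).1 hv)
    · apply (hsig.2 (u ++ [0]) hS0 hA0).2
      intro v hv
      exact (hsig.2 u hSu hnA).1 v ((hSukiff v).2 hv)

end Skip

/-! ### The correspondence lemma -/

section Correspondence

variable {i k : ℕ} {P : Bool} {t : Label} {j : ℕ}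

local notation "t'" => node1 (Sym.pri j) t

variable {S S'' : List ℕ → Prop} {s s' : List ℕ → ℕ → Ordinal}

theorem correspondence
    (ht : IsTree t i k) (hj : PWinning i k P j)
    (hw : IsWinningStrategy t P S) (hsig : SigDef t i k P S s)
    (hw'' : IsWinningStrategy t' P S'') (hsig' : SigDef t' i k P S'' s')
    (hrest : ∀ w, S'' (0 :: w) ↔ S w) :
    ∀ w, S w → ∀ j', PLosing i k P j' → j' < j → s w j' = s' (0 :: w) j' := by
  classical
  have ht' : IsTree t' i k := node1_pri_isTree ht hj.1 hj.2.1
  have monoT := sig_mono ht hw hsig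
  have monoT' := sig_mono ht' hw'' hsig'
  have hz := high_zero hj hsig'
  intro w
  induction w using (wfRel ht hw).induction with
  | _ w IH =>
  intro hSw j' hPj' hj'j
  by_cases hA : Active t i k P S w
  · have hpri := hA.pri.1
    have hlos := hA.pri.2
    have hS0 : S (w ++ [0]) := active_child ht hw.1 hA
    have hrel0 : Rel t i k P S (w ++ [0]) w := rel_child ht hw.1 hA
    by_cases hmmj : priAt t w < j
    · have hA' : Active t' i k P S'' (0 :: w) := active_up hj hrest hA hmmj
      have hpri' : t' (0 :: w) = some (Sym.pri (priAt t w)) := (t'_cons w).trans hpri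
      have f1 := hsig.1 w (priAt t w) hA hpri j' hPj'
      have f2 := hsig'.1 (0 :: w) (priAt t w) hA' hpri' j' hPj'
      rcases lt_trichotomy j' (priAt t w) with hc | hc | hc
      · rw [f1.1 hc, f2.1 hc]
        exact IH (w ++ [0]) hrel0 hS0 j' hPj' hj'j
      · rw [f1.2.1 hc, f2.2.1 hc]
        rw [IH (w ++ [0]) hrel0 hS0 (priAt t w) hlos hmmj]
        rfl
      · rw [f1.2.2 hc, f2.2.2 hc]
    · have hmmj' : j < priAt t w := by
        have := plosing_ne hj hlos
        omega
      have hnA' : ¬ Active t' i k P S'' (0 :: w) := by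
        intro c
        have := (active_down hj hrest c).2
        omega
      have hskip : sigEq i k P (s' (0 :: w)) (s' ((0 :: w) ++ [0])) :=
        skip_node ht' hw''.1 hsig' ((hrest w).2 hSw) hnA' ((t'_cons w).trans hpri)
      have f1 := hsig.1 w (priAt t w) hA hpri j' hPj'
      rw [f1.1 (by omega), hskip j' hPj']
      exact IH (w ++ [0]) hrel0 hS0 j' hPj' hj'j
  · have hnA' : ¬ Active t' i k P S'' (0 :: w) := fun c => hA (active_down hj hrest c).1
    have hSw'' : S'' (0 :: w) := (hrest w).2 hSw
    -- upper bound direction (II)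
    have hII : sigLe i k P (s' (0 :: w)) (truncJ j (s w)) := by
      apply (hsig'.2 (0 :: w) hSw'' hnA').2
      intro v hv
      obtain ⟨w', rfl⟩ := active_shape hj hv.1
      have hdown := active_down hj hrest hv.1
      have hAw' : Active t i k P S w' := hdown.1
      have hprefw' : w <+: w' := (List.cons_prefix_cons.1 hv.2.1).2
      have hnew' : w' ≠ w := fun e => hA (e ▸ hAw')
      have hrelw' : Rel t i k P S w' w :=
        ⟨hSw, hAw'.strat, hprefw', fun e => hnew' e.symm, Or.inr hAw'⟩
      have hIHw' := IH w' hrelw' hAw'.strat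
      have he : sigEq i k P (s' (0 :: w')) (truncJ j (s w')) := by
        intro m hm
        show s' (0 :: w') m = if m < j then s w' m else 0
        by_cases hmj : m < j
        · rw [if_pos hmj]
          exact (hIHw' m hm hmj).symm
        · rw [if_neg hmj]
          exact hz (0 :: w') hv.1.strat m hm (by omega)
      exact sigLe_congr_left he.symm
        (truncJ_mono (monoT w hSw w' hAw'.strat hprefw'))
    -- lower bound direction (I)
    have hI : sigLe i k P (truncJ j (s w)) (s' (0 :: w)) := by
      set Θ : Ordinal := sSup (Set.range (fun p : List ℕ × ℕ => s p.1 p.2)) + 1 with hΘ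
      have hΘbig : ∀ v m, s v m < Θ := by
        intro v m
        have h1 : s v m ≤ sSup (Set.range (fun p : List ℕ × ℕ => s p.1 p.2)) :=
          le_csSup (Ordinal.bddAbove_range _) ⟨(v, m), rfl⟩
        have h2 : sSup (Set.range (fun p : List ℕ × ℕ => s p.1 p.2)) < Θ := by
          rw [hΘ, Ordinal.add_one_eq_succ]
          exact Order.lt_succ _
        exact lt_of_le_of_lt h1 h2
      set τs : ℕ → Ordinal := fun m => if m < j then s' (0 :: w) m else Θ with hτs
      have hub : ∀ v, Suk t i k P S w v → sigLe i k P (s v) τs := by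
        intro v hv
        have hAv := hv.1
        have hrelv : Rel t i k P S v w :=
          ⟨hSw, hAv.strat, hv.2.1, fun e => hA (e ▸ hAv), Or.inr hAv⟩
        have hIHv := IH v hrelv hAv.strat
        have hmono' : sigLe i k P (s' (0 :: v)) (s' (0 :: w)) :=
          monoT' (0 :: w) hSw'' (0 :: v) ((hrest v).2 hAv.strat)
            (List.cons_prefix_cons.2 ⟨rfl, hv.2.1⟩)
        rcases hmono' with ⟨c, hc, hclt, hcbel⟩ | heq2
        · have hcj : c < j := by
            by_contra hcj
            have z1 := hz (0 :: v) ((hrest v).2 hAv.strat) c hc (by omega)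
            have z2 := hz (0 :: w) hSw'' c hc (by omega)
            rw [z1, z2] at hclt
            exact absurd hclt (lt_irrefl _)
          refine Or.inl ⟨c, hc, ?_, ?_⟩
          · show s v c < τs c
            simp only [hτs, if_pos hcj]
            rw [hIHv c hc hcj]
            exact hclt
          · intro m h1 h2
            show s v m = τs m
            have hmj : m < j := lt_trans h2 hcj
            simp only [hτs, if_pos hmj]
            rw [hIHv m h1 hmj]
            exact hcbel m h1 h2
        · by_cases hex : ∃ m, PLosing i k P m ∧ j ≤ m
          · set l0 := Nat.find hex with hl0
            obtain ⟨hl0P, hl0j⟩ := Nat.find_spec hex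
            refine Or.inl ⟨l0, hl0P, ?_, ?_⟩
            · show s v l0 < τs l0
              simp only [hτs, if_neg (by omega : ¬ l0 < j)]
              exact hΘbig v l0
            · intro m h1 h2
              show s v m = τs m
              by_cases hmj : m < j
              · simp only [hτs, if_pos hmj]
                rw [hIHv m h1 hmj]
                exact heq2 m h1
              · exact absurd (Nat.find_min hex h2) (fun c => c ⟨h1, by omega⟩)
          · push_neg at hex
            refine Or.inr (fun m hm => ?_)
            have hmj : m < j := by have := hex m hm; omega
            show s v m = τs m
            simp only [hτs, if_pos hmj]
            rw [hIHv m hm hmj]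
            exact heq2 m hm
      have hlew : sigLe i k P (s w) τs := (hsig.2 w hSw hA).2 τs hub
      rcases hlew with ⟨c, hc, hclt, hcbel⟩ | heq
      · by_cases hcj : c < j
        · refine Or.inl ⟨c, hc, ?_, ?_⟩
          · show truncJ j (s w) c < s' (0 :: w) c
            simp only [hτs, if_pos hcj] at hclt
            simpa [truncJ, if_pos hcj] using hclt
          · intro m h1 h2
            have hmj : m < j := lt_trans h2 hcj
            show truncJ j (s w) m = s' (0 :: w) m
            have := hcbel m h1 h2
            simp only [hτs, if_pos hmj] at this
            simpa [truncJ, if_pos hmj] using this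
        · refine Or.inr (fun m hm => ?_)
          show truncJ j (s w) m = s' (0 :: w) m
          by_cases hmj : m < j
          · have := hcbel m hm (by omega)
            simp only [hτs, if_pos hmj] at this
            simpa [truncJ, if_pos hmj] using this
          · rw [show truncJ j (s w) m = 0 from if_neg hmj]
            exact (hz (0 :: w) hSw'' m hm (by omega)).symm
      · refine Or.inr (fun m hm => ?_)
        show truncJ j (s w) m = s' (0 :: w) m
        by_cases hmj : m < j
        · have := heq m hm
          simp only [hτs, if_pos hmj] at this
          simpa [truncJ, if_pos hmj] using this
        · rw [show truncJ j (s w) m = 0 from if_neg hmj]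
          exact (hz (0 :: w) hSw'' m hm (by omega)).symm
    have hfin : sigEq i k P (truncJ j (s w)) (s' (0 :: w)) := sigLe_antisymm hI hII
    have := hfin j' hPj'
    simpa [truncJ, if_pos hj'j] using this

end Correspondence
/-- The effect of a `P`-winning priority on the signature: if `j` is `P`-winning
and `σ_P(t) = (θ_{i'},…,θ_{k'}) ≠ ∞`, then `σ_P(p_j(t))` preserves the
coordinates strictly below `j` and zeroes the coordinates at or above `j`. -/
theorem sig_prepend_winning_priority (i k : ℕ) (P : Bool) (t : Label) (j : ℕ)
    (σ : ℕ → Ordinal)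
    (ht : GoodTree t i k) (hj : PWinning i k P j)
    (hσ : IsSigOf t i k P σ) :
    IsSigOf (node1 (Sym.pri j) t) i k P
      (fun j' => if j' < j then σ j' else 0) := by
  obtain ⟨htree, hwf⟩ := ht
  have ht' : IsTree (node1 (Sym.pri j) t) i k := node1_pri_isTree htree hj.1 hj.2.1
  obtain ⟨⟨S, s, hwin, hsig, heq⟩, hmin⟩ := hσ
  have hw' : IsWinningStrategy (node1 (Sym.pri j) t) P (liftS S) := lift_winning htree hwin
  obtain ⟨s', hsig'⟩ := exists_sigDef ht' hw'
  have hrest : ∀ w, liftS S (0 :: w) ↔ S w := fun w => liftS_cons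
  have hcorr := correspondence htree hj hwin hsig hw' hsig' hrest
  have hroot := root_eq_child htree hj hw'.1 hsig'
  have hz := high_zero hj hsig'
  constructor
  · refine ⟨liftS S, s', hw', hsig', ?_⟩
    intro m hm
    show (if m < j then σ m else 0) = s' [] m
    by_cases hmj : m < j
    · rw [if_pos hmj, heq m hm, hcorr [] hwin.1.1 m hm hmj]
      exact (hroot m hm).symm
    · rw [if_neg hmj]
      exact (hz [] hw'.1.1 m hm (by omega)).symm
  · intro τ hτ
    obtain ⟨S'', s'', hw'', hsig'', heq''⟩ := hτ
    have hwr : IsWinningStrategy t P (fun w => S'' (0 :: w)) := restrict_winning htree hw''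
    obtain ⟨s0, hsig0⟩ := exists_sigDef htree hwr
    have hmin0 := hmin (s0 []) ⟨_, s0, hwr, hsig0, sigEq.refl _⟩
    have hcorr0 := correspondence htree hj hwr hsig0 hw'' hsig'' (fun w => Iff.rfl)
    have hroot'' := root_eq_child htree hj hw''.1 hsig''
    have hz'' := high_zero hj hsig''
    have he1 : sigEq i k P (truncJ j (s0 [])) (s'' []) := by
      intro m hm
      show (if m < j then s0 [] m else 0) = s'' [] m
      by_cases hmj : m < j
      · rw [if_pos hmj, hcorr0 [] hwr.1.1 m hm hmj]
        exact (hroot'' m hm).symm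
      · rw [if_neg hmj]
        exact (hz'' [] hw''.1.1 m hm (by omega)).symm
    have h2 : sigLe i k P (fun j' => if j' < j then σ j' else 0) (truncJ j (s0 [])) :=
      truncJ_mono hmin0
    exact sigLe_congr_right heq''.symm (sigLe_congr_right he1 h2)

end UnambSig
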